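/- arXiv:1710.05532 — 2 statements merged into one kernel-verified Lean document; each statement's English description precedes it below -/
import Mathlib

section
/- Let e ≥ 1 and let Γ ≤ SL₂(ℤ) be a congruence subgroup containing the three matrices [[1, e],[0, 1]], [[1, 0],[e, 1]], and [[1+e, −e],[e, 1−e]]. Then Γ contains the principal congruence subgroup Γ(e) = ker(SL₂(ℤ) → SL₂(ℤ/e)). -/
/-!
Since `Γ(N) ≤ Γ`, it suffices to show `Γ(e) ≤ Γ ⊔ Γ(N)`; write `N ∣ eᵏ⁺¹ m` with `m` prime to `e`.

The `e`-part: `X₁, X₂, X₃` span the traceless matrices, and an element `1 + εA` of `Γ(ε)`,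
`ε = eʲ⁺¹`, satisfies `ε tr A ≡ 0 mod ε²`. Hence it agrees modulo `ε²`, so modulo `eʲ⁺²`, with a
product `(1 + εyX₁)(1 + εzX₂)(1 + εwX₃)` of elements of `Γ`. Iterating, `Γ(e) ≤ Γ ⊔ Γ(eᵏ⁺¹)`.

The prime-to-`e` part: `c = eᵏ⁺¹` is a unit modulo `m`, so `Γ ∩ Γ(c)` contains elements reducing
to `S` and `T` modulo `m`. These generate `SL₂(ℤ)`, so `Γ(c) ≤ Γ ⊔ Γ(cm) ≤ Γ ⊔ Γ(N)`.
-/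

open CongruenceSubgroup
open scoped MatrixGroups

theorem Nat.exists_coprime_dvd_pow_mul (e : ℕ) {N : ℕ} (hN : N ≠ 0) :
    ∃ k m, Nat.Coprime e m ∧ N ∣ e ^ k * m := by
  induction N using Nat.strong_induction_on with
  | _ N ih =>
    by_cases h : Nat.Coprime e N
    · exact ⟨0, N, h, by simp⟩
    obtain ⟨N', hN'⟩ := Nat.gcd_dvd_right e N
    have hg : 1 < Nat.gcd e N :=
      lt_of_le_of_ne (Nat.gcd_pos_of_pos_right e (Nat.pos_of_ne_zero hN)) (Ne.symm h)
    have hN'0 : N' ≠ 0 := by rintro rfl; exact hN (by simpa using hN')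
    obtain ⟨k, m, hm, hdvd⟩ :=
      ih N' (hN' ▸ lt_mul_left (Nat.pos_of_ne_zero hN'0) hg) hN'0
    refine ⟨k + 1, m, hm, ?_⟩
    rw [hN', pow_succ', mul_assoc]
    exact mul_dvd_mul (Nat.gcd_dvd_left e N) hdvd

theorem Matrix.SpecialLinearGroup.coe_zpow_of_mul_self_eq_zero {n R : Type*} [Fintype n]
    [DecidableEq n] [CommRing R] {g : SpecialLinearGroup n R} {X : Matrix n n R}
    (hg : (g : Matrix n n R) = 1 + X) (hX : X * X = 0) (k : ℤ) :
    ((g ^ k : SpecialLinearGroup n R) : Matrix n n R) = 1 + (k : R) • X := by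
  have hinv : ((g⁻¹ : SpecialLinearGroup n R) : Matrix n n R) = 1 - X := by
    have h : (g : Matrix n n R) * (1 - X) = 1 := by simp [hg, mul_sub, add_mul, hX]
    calc _ = ((g⁻¹ : SpecialLinearGroup n R) : Matrix n n R) * (g * (1 - X)) := by
          rw [h, mul_one]
      _ = 1 - X := by
          rw [← mul_assoc, ← coe_mul, inv_mul_cancel, coe_one, one_mul]
  induction k using Int.induction_on with
  | zero => simp
  | succ k ih =>
    simp only [_root_.zpow_add_one, coe_mul, ih, hg, mul_add, add_mul, smul_mul_assoc, hX,
      mul_one, one_mul, smul_zero, add_zero]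
    module
  | pred k ih =>
    simp only [_root_.zpow_sub_one, coe_mul, ih, hinv, mul_sub, add_mul, smul_mul_assoc, hX,
      mul_one, one_mul, smul_zero, add_zero]
    module

theorem exists_mem_coe_eq_one_add_smul_of_dvd {n : Type*} [Fintype n] [DecidableEq n]
    {Γ : Subgroup (Matrix.SpecialLinearGroup n ℤ)} {X : Matrix n n ℤ} (hX : X * X = 0) {r : ℤ}
    {g : Matrix.SpecialLinearGroup n ℤ} (hg : g ∈ Γ) (hgX : (g : Matrix n n ℤ) = 1 + r • X)
    (x : ℤ) (hx : r ∣ x) : ∃ g ∈ Γ, (g : Matrix n n ℤ) = 1 + x • X := by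
  obtain ⟨k, rfl⟩ := hx
  refine ⟨g ^ k, zpow_mem hg k, ?_⟩
  rw [Matrix.SpecialLinearGroup.coe_zpow_of_mul_self_eq_zero hgX
    (by rw [smul_mul_smul_comm, hX, smul_zero]), smul_smul, Int.cast_id, mul_comm]

-- Modulo `ε²` the product is `1 + ε [[a, b], [c, -a]]`, and `det (1 + εA) = 1` forces
-- `ε (a + d) = 0`.
theorem one_add_smul_eq_mul_mul_of_mul_self_eq_zero {R : Type*} [CommRing R] {ε : R}
    (hε : ε * ε = 0) {A : Matrix (Fin 2) (Fin 2) R} (hA : (1 + ε • A).det = 1) :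
    1 + ε • A = (1 + (ε * (A 0 1 + A 0 0)) • !![0, 1; 0, 0]) *
      (1 + (ε * (A 1 0 - A 0 0)) • !![0, 0; 1, 0]) * (1 + (ε * A 0 0) • !![1, -1; 1, -1]) := by
  rw [Matrix.det_fin_two] at hA
  simp only [Matrix.add_apply, Matrix.one_apply_eq, Matrix.smul_apply, smul_eq_mul,
    Matrix.one_apply_ne, ne_eq, zero_ne_one, one_ne_zero, not_false_eq_true, zero_add] at hA
  set a := A 0 0; set b := A 0 1; set c := A 1 0; set d := A 1 1
  have htr : ε * (a + d) = 0 := by linear_combination hA + (b * c - a * d) * hε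
  ext i j
  fin_cases i <;> fin_cases j <;> simp [Matrix.mul_apply, Fin.sum_univ_two]
  · linear_combination (-((b + a) * (c - a) * (1 + ε * a) + (b + a) * a)) * hε
  · linear_combination ((b + a) * (c - a) * ε * a + (b + a) * a) * hε
  · linear_combination (-((c - a) * a)) * hε
  · linear_combination htr + (c - a) * a * hε

namespace CongruenceSubgroup

theorem mem_Gamma_iff_forall_dvd {N : ℕ} {γ : SL(2, ℤ)} :
    γ ∈ Gamma N ↔ ∀ i j,
      (N : ℤ) ∣ (γ : Matrix (Fin 2) (Fin 2) ℤ) i j - (1 : Matrix (Fin 2) (Fin 2) ℤ) i j := by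
  simp only [Gamma_mem, Fin.forall_fin_two, Matrix.one_apply,
    ← ZMod.intCast_eq_intCast_iff_dvd_sub]
  simp [eq_comm, and_assoc]

theorem mem_Gamma_iff_exists_coe_eq_one_add_smul {N : ℕ} {γ : SL(2, ℤ)} :
    γ ∈ Gamma N ↔ ∃ A, (γ : Matrix (Fin 2) (Fin 2) ℤ) = 1 + (N : ℤ) • A := by
  rw [mem_Gamma_iff_forall_dvd]
  constructor
  · intro h
    refine ⟨((γ : Matrix (Fin 2) (Fin 2) ℤ) - 1).map (· / (N : ℤ)), ?_⟩
    ext i j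
    simp only [Matrix.add_apply, Matrix.smul_apply, Matrix.map_apply, smul_eq_mul,
      Int.mul_ediv_cancel' (h i j), Matrix.sub_apply, add_sub_cancel]
  · rintro ⟨A, hA⟩ i j
    simp only [hA, Matrix.add_apply, Matrix.smul_apply, smul_eq_mul, add_sub_cancel_left,
      dvd_mul_right]

theorem Gamma_le_Gamma_of_dvd {a b : ℕ} (h : a ∣ b) : Gamma b ≤ Gamma a := fun _ hγ =>
  mem_Gamma_iff_forall_dvd.2 fun i j =>
    (Int.natCast_dvd_natCast.2 h).trans (mem_Gamma_iff_forall_dvd.1 hγ i j)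

theorem Gamma_inf_Gamma_le_Gamma_mul {a b : ℕ} (h : Nat.Coprime a b) :
    Gamma a ⊓ Gamma b ≤ Gamma (a * b) := fun _ ⟨ha, hb⟩ =>
  mem_Gamma_iff_forall_dvd.2 fun i j => by
    push_cast
    exact (Nat.isCoprime_iff_coprime.2 h).mul_dvd (mem_Gamma_iff_forall_dvd.1 ha i j)
      (mem_Gamma_iff_forall_dvd.1 hb i j)

theorem mem_sup_Gamma_of_map_eq {K : Subgroup SL(2, ℤ)} {N : ℕ} {g γ : SL(2, ℤ)} (hg : g ∈ K)
    (h : Matrix.SpecialLinearGroup.map (Int.castRingHom (ZMod N)) g =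
      Matrix.SpecialLinearGroup.map (Int.castRingHom (ZMod N)) γ) :
    γ ∈ K ⊔ Gamma N := by
  rw [Gamma, ← Subgroup.comap_map_eq]
  exact ⟨g, hg, h⟩

section Descent

variable {Γ : Subgroup SL(2, ℤ)} {e : ℕ}
  (hU : ∀ x : ℤ, (e : ℤ) ∣ x → ∃ g ∈ Γ, (g : Matrix (Fin 2) (Fin 2) ℤ) = 1 + x • !![0, 1; 0, 0])
  (hL : ∀ x : ℤ, (e : ℤ) ∣ x → ∃ g ∈ Γ, (g : Matrix (Fin 2) (Fin 2) ℤ) = 1 + x • !![0, 0; 1, 0])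
  (hW : ∀ x : ℤ, (e : ℤ) ∣ x → ∃ g ∈ Γ, (g : Matrix (Fin 2) (Fin 2) ℤ) = 1 + x • !![1, -1; 1, -1])
include hU hL hW

theorem Gamma_pow_succ_le_sup_Gamma_pow_add_two (j : ℕ) :
    Gamma (e ^ (j + 1)) ≤ Γ ⊔ Gamma (e ^ (j + 2)) := by
  intro γ hγ
  obtain ⟨A, hA⟩ := mem_Gamma_iff_exists_coe_eq_one_add_smul.1 hγ
  set E : ℤ := ((e ^ (j + 1) : ℕ) : ℤ)
  have he : (e : ℤ) ∣ E := ⟨e ^ j, by push_cast [E]; ring⟩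
  obtain ⟨g₁, hg₁, h₁⟩ := hU (E * (A 0 1 + A 0 0)) (he.mul_right _)
  obtain ⟨g₂, hg₂, h₂⟩ := hL (E * (A 1 0 - A 0 0)) (he.mul_right _)
  obtain ⟨g₃, hg₃, h₃⟩ := hW (E * A 0 0) (he.mul_right _)
  refine mem_sup_Gamma_of_map_eq (mul_mem (mul_mem hg₁ hg₂) hg₃) ?_
  set f := Int.castRingHom (ZMod (e ^ (j + 2)))
  have hmap (x : ℤ) (X : Matrix (Fin 2) (Fin 2) ℤ) :
      f.mapMatrix (1 + x • X) = 1 + f x • X.map f := by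
    rw [map_add, map_one, map_zsmul, ← Int.cast_smul_eq_zsmul (ZMod (e ^ (j + 2)))]
    rfl
  have hε : f E * f E = 0 := by
    rw [← map_mul, eq_intCast, ZMod.intCast_zmod_eq_zero_iff_dvd]
    exact ⟨e ^ j, by push_cast [E]; ring⟩
  have hdet := (Matrix.SpecialLinearGroup.map f γ).2
  rw [Matrix.SpecialLinearGroup.map_apply_coe, hA, hmap] at hdet
  apply Subtype.ext
  simp only [Matrix.SpecialLinearGroup.map_apply_coe, Matrix.SpecialLinearGroup.coe_mul, map_mul,
    h₁, h₂, h₃, hA, hmap]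
  rw [one_add_smul_eq_mul_mul_of_mul_self_eq_zero hε hdet]
  have hX (a b c d : ℤ) :
      (!![a, b; c, d] : Matrix (Fin 2) (Fin 2) ℤ).map f = !![f a, f b; f c, f d] := by
    rw [Matrix.eta_fin_two (Matrix.map _ _)]
    rfl
  simp [hX]

theorem Gamma_le_sup_Gamma_pow_succ (k : ℕ) : Gamma e ≤ Γ ⊔ Gamma (e ^ (k + 1)) := by
  induction k with
  | zero => rw [zero_add, pow_one]; exact le_sup_right
  | succ k ih =>
    exact ih.trans (sup_le le_sup_left (Gamma_pow_succ_le_sup_Gamma_pow_add_two hU hL hW k))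

end Descent

section CoprimePart

variable {Γ : Subgroup SL(2, ℤ)} {c m : ℕ} (hcm : Nat.Coprime c m)
  (hU : ∀ x : ℤ, (c : ℤ) ∣ x → ∃ g ∈ Γ, (g : Matrix (Fin 2) (Fin 2) ℤ) = 1 + x • !![0, 1; 0, 0])
  (hL : ∀ x : ℤ, (c : ℤ) ∣ x → ∃ g ∈ Γ, (g : Matrix (Fin 2) (Fin 2) ℤ) = 1 + x • !![0, 0; 1, 0])
include hcm hU hL

theorem inf_Gamma_sup_Gamma_eq_top : Γ ⊓ Gamma c ⊔ Gamma m = ⊤ := by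
  have hmem (X : Matrix (Fin 2) (Fin 2) ℤ)
      (hX : ∀ x : ℤ, (c : ℤ) ∣ x → ∃ g ∈ Γ, (g : Matrix (Fin 2) (Fin 2) ℤ) = 1 + x • X) (y : ℤ) :
      ∃ g ∈ Γ ⊓ Gamma c, (g : Matrix (Fin 2) (Fin 2) ℤ) = 1 + (c * y) • X := by
    obtain ⟨g, hg, hgX⟩ := hX _ (dvd_mul_right _ y)
    refine ⟨g, ⟨hg, ?_⟩, hgX⟩
    exact mem_Gamma_iff_exists_coe_eq_one_add_smul.2 ⟨y • X, by rw [hgX, smul_smul]⟩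
  obtain ⟨u, v, huv⟩ := Nat.isCoprime_iff_coprime.2 hcm
  have hu : (c : ZMod m) * u = 1 := by
    have := congrArg (Int.cast : ℤ → ZMod m) huv
    push_cast [ZMod.natCast_self] at this
    linear_combination this
  obtain ⟨t, ht, htX⟩ := hmem _ hU u
  obtain ⟨t', ht', ht'X⟩ := hmem _ hU (-u)
  obtain ⟨l, hl, hlX⟩ := hmem _ hL u
  rw [eq_top_iff, ← SpecialLinearGroup.SL2Z_generators, Subgroup.closure_le, Set.insert_subset_iff,
    Set.singleton_subset_iff]
  -- `S = [[1, -1], [0, 1]] [[1, 0], [1, 1]] [[1, -1], [0, 1]]`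
  refine ⟨mem_sup_Gamma_of_map_eq (mul_mem (mul_mem ht' hl) ht') ?_, mem_sup_Gamma_of_map_eq ht ?_⟩
  · apply Subtype.ext
    ext i j
    fin_cases i <;> fin_cases j <;> simp [ht'X, hlX, Matrix.mul_apply, Fin.sum_univ_two, hu]
  · apply Subtype.ext
    ext i j
    fin_cases i <;> fin_cases j <;> simp [htX, hu]

theorem Gamma_le_sup_Gamma_mul : Gamma c ≤ Γ ⊔ Gamma (c * m) := by
  intro γ hγ
  have := Gamma_normal m
  have hγ' : γ ∈ ((Γ ⊓ Gamma c ⊔ Gamma m : Subgroup SL(2, ℤ)) : Set SL(2, ℤ)) := by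
    rw [inf_Gamma_sup_Gamma_eq_top hcm hU hL]; trivial
  rw [Subgroup.mul_normal] at hγ'
  obtain ⟨k, hk, z, hz, rfl⟩ := hγ'
  obtain ⟨hkΓ, hkc⟩ := Subgroup.mem_inf.1 hk
  have hzc : z ∈ Gamma c := by simpa using mul_mem (inv_mem hkc) hγ
  exact Subgroup.mul_mem_sup hkΓ (Gamma_inf_Gamma_le_Gamma_mul hcm ⟨hzc, hz⟩)

end CoprimePart

end CongruenceSubgroup

theorem stmt_15_general (e : ℕ)
    (Γ : Subgroup (Matrix.SpecialLinearGroup (Fin 2) ℤ))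
    (hΓ : IsCongruenceSubgroup Γ)
    (h₁ : ∀ g : Matrix.SpecialLinearGroup (Fin 2) ℤ,
      (g : Matrix (Fin 2) (Fin 2) ℤ) = !![1, (e : ℤ); 0, 1] → g ∈ Γ)
    (h₂ : ∀ g : Matrix.SpecialLinearGroup (Fin 2) ℤ,
      (g : Matrix (Fin 2) (Fin 2) ℤ) = !![1, 0; (e : ℤ), 1] → g ∈ Γ)
    (h₃ : ∀ g : Matrix.SpecialLinearGroup (Fin 2) ℤ,
      (g : Matrix (Fin 2) (Fin 2) ℤ) = !![1 + (e : ℤ), -(e : ℤ); (e : ℤ), 1 - (e : ℤ)] →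
        g ∈ Γ) :
    Gamma e ≤ Γ := by
  obtain ⟨N, hN0, hN⟩ := hΓ
  have hU := exists_mem_coe_eq_one_add_smul_of_dvd (X := !![0, 1; 0, 0]) (r := e) (by decide)
    (h₁ ⟨!![1, e; 0, 1], by simp [Matrix.det_fin_two_of]⟩ rfl) (by simp [Matrix.one_fin_two])
  have hL := exists_mem_coe_eq_one_add_smul_of_dvd (X := !![0, 0; 1, 0]) (r := e) (by decide)
    (h₂ ⟨!![1, 0; e, 1], by simp [Matrix.det_fin_two_of]⟩ rfl) (by simp [Matrix.one_fin_two])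
  have hW := exists_mem_coe_eq_one_add_smul_of_dvd (X := !![1, -1; 1, -1]) (r := e) (by decide)
    (h₃ ⟨!![1 + e, -e; e, 1 - e], by simp [Matrix.det_fin_two_of]; ring⟩ rfl)
    (by simp [Matrix.one_fin_two, sub_eq_add_neg])
  obtain ⟨k, m, hem, hdvd⟩ := Nat.exists_coprime_dvd_pow_mul e hN0
  have hec : (e : ℤ) ∣ ((e ^ (k + 1) : ℕ) : ℤ) := by exact_mod_cast dvd_pow_self e k.succ_ne_zero
  calc Gamma e ≤ Γ ⊔ Gamma (e ^ (k + 1)) := Gamma_le_sup_Gamma_pow_succ hU hL hW k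
    _ ≤ Γ ⊔ (Γ ⊔ Gamma (e ^ (k + 1) * m)) := sup_le_sup_left (Gamma_le_sup_Gamma_mul
        (hem.pow_left _) (fun x hx => hU x (hec.trans hx)) (fun x hx => hL x (hec.trans hx))) Γ
    _ ≤ Γ := by
      rw [← sup_assoc, sup_idem]
      exact sup_le le_rfl ((Gamma_le_Gamma_of_dvd
        (hdvd.trans (mul_dvd_mul_right (pow_dvd_pow e k.le_succ) m))).trans hN)

/-- Let `e ≥ 1` and `Γ ≤ SL₂(ℤ)` a congruence subgroup containing the three matrices
`[[1, e],[0, 1]]`, `[[1, 0],[e, 1]]`, `[[1+e, −e],[e, 1−e]]` (i.e. `1 + eXᵢ` for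
`X₁ = [[0,1],[0,0]]`, `X₂ = [[0,0],[1,0]]`, `X₃ = [[1,−1],[1,−1]]`).
Then `Γ` contains the principal congruence subgroup `Γ(e)`. -/
theorem stmt_15 (e : ℕ) (he : 1 ≤ e)
    (Γ : Subgroup (Matrix.SpecialLinearGroup (Fin 2) ℤ))
    (hΓ : IsCongruenceSubgroup Γ)
    (h₁ : ∀ g : Matrix.SpecialLinearGroup (Fin 2) ℤ,
      (g : Matrix (Fin 2) (Fin 2) ℤ) = !![1, (e : ℤ); 0, 1] → g ∈ Γ)
    (h₂ : ∀ g : Matrix.SpecialLinearGroup (Fin 2) ℤ,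
      (g : Matrix (Fin 2) (Fin 2) ℤ) = !![1, 0; (e : ℤ), 1] → g ∈ Γ)
    (h₃ : ∀ g : Matrix.SpecialLinearGroup (Fin 2) ℤ,
      (g : Matrix (Fin 2) (Fin 2) ℤ) = !![1 + (e : ℤ), -(e : ℤ); (e : ℤ), 1 - (e : ℤ)] →
        g ∈ Γ) :
    Gamma e ≤ Γ :=
  stmt_15_general e Γ hΓ h₁ h₂ h₃
end

section
/- Let M̂ be the free profinite metabelian group of rank 2 with generators x₁, x₂, abelianization Â with images a₁, a₂, and let R = Ẑ[[Â]] be the completed group algebra acting on M̂'. For r = (r₁, r₂) ∈ R², let γ_r be the IA-endomorphism of M̂ with γ_r(xᵢ) = [x₁,x₂]^{rᵢ} xᵢ. Then γ_r acts on M̂' (a free R-module of rank 1 generated by [x₁,x₂]) by multiplication by det(γ_r) = 1 + r₁(1 − a₂) + r₂(a₁ − 1); i.e., γ_r([x₁,x₂]) = [x₁,x₂]^{1 + r₁(1−a₂) + r₂(a₁−1)}. -/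
/-!
Let `d = 1 + r₁(1 - a₂) + r₂(a₁ - 1)`. The elements `E s` with `γ (E s) = E (d s)` form a
subgroup `H`. Because conjugation by `xᵢ` multiplies `E`-coordinates by `aᵢ`, `γ xᵢ = E rᵢ * xᵢ`
and `E(R)` is abelian, `H` is normalised by `x₁` and `x₂`, hence normal. Expanding
`γ ⁅x₁, x₂⁆ = ⁅E r₁ * x₁, E r₂ * x₂⁆` gives `E d`, so `⁅x₁, x₂⁆ ∈ H`. Then `G ⧸ H` is generated
by two commuting elements, so `commutator G ≤ H`, and injectivity of `E` gives the claim for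
every `s`.
-/

open scoped commutatorElement

theorem commutator_le_of_closure_eq_top {G : Type*} [Group G] {N : Subgroup G}
    [N.Normal] {s : Set G} (hs : Subgroup.closure s = ⊤) (h : ∀ x ∈ s, ∀ y ∈ s, ⁅x, y⁆ ∈ N) :
    commutator G ≤ N := by
  let π := QuotientGroup.mk' N
  have hcomm : ∀ a ∈ π '' s, ∀ b ∈ π '' s, a * b = b * a := by
    rintro _ ⟨x, hx, rfl⟩ _ ⟨y, hy, rfl⟩
    rw [← commutatorElement_eq_one_iff_mul_comm, ← map_commutatorElement,
      QuotientGroup.mk'_apply, QuotientGroup.eq_one_iff]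
    exact h x hx y hy
  have hcent : ∀ a : G ⧸ N, a ∈ Subgroup.centralizer (Subgroup.centralizer (π '' s)) := by
    intro a
    apply Subgroup.closure_le_centralizer_centralizer
    rw [← MonoidHom.map_closure, hs,
      Subgroup.map_top_of_surjective π (QuotientGroup.mk'_surjective N)]
    trivial
  rw [commutator_def, Subgroup.commutator_le]
  intro x _ y _
  rw [← QuotientGroup.eq_one_iff, ← QuotientGroup.mk'_apply, map_commutatorElement,
    commutatorElement_eq_one_iff_mul_comm]
  exact Set.centralizer_centralizer_comm_of_comm hcomm _ (hcent _) _ (hcent _)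

theorem commutator_le_of_closure_pair_eq_top {G : Type*} [Group G] {N : Subgroup G} [N.Normal]
    {x y : G} (hxy : Subgroup.closure {x, y} = ⊤) (h : ⁅x, y⁆ ∈ N) : commutator G ≤ N := by
  refine commutator_le_of_closure_eq_top hxy ?_
  rintro a (rfl | rfl) b (rfl | rfl)
  · simp
  · exact h
  · rw [← commutatorElement_inv]; exact N.inv_mem h
  · simp

section AdditiveCoordinate

variable {G R : Type*} [Group G] [CommRing R] {E : R → G}

theorem map_zero_of_map_add (hE : ∀ r s, E (r + s) = E r * E s) : E 0 = 1 := by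
  simpa using hE 0 0

theorem map_neg_of_map_add (hE : ∀ r s, E (r + s) = E r * E s) (s : R) : E (-s) = (E s)⁻¹ :=
  eq_inv_of_mul_eq_one_left (by rw [← hE, neg_add_cancel, map_zero_of_map_add hE])

theorem inv_conj_eq_of_conj_eq {g : G} {u : Rˣ} (hg : ∀ s, g * E s * g⁻¹ = E (u * s)) (s : R) :
    g⁻¹ * E s * g = E (↑u⁻¹ * s) := by
  have := hg (↑u⁻¹ * s)
  rw [← mul_assoc, Units.mul_inv, one_mul] at this
  rw [← this]; group

theorem commutatorElement_mul_mul_of_conj (hE : ∀ r s, E (r + s) = E r * E s)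
    {g h : G} {u v c : R}
    (hg : ∀ s, g * E s * g⁻¹ = E (u * s)) (hh : ∀ s, h * E s * h⁻¹ = E (v * s))
    (hgh : ⁅g, h⁆ = E c) (t t' : R) :
    ⁅E t * g, E t' * h⁆ = E (c + (u - 1) * t' - (v - 1) * t) := by
  have : ⁅E t * g, E t' * h⁆ = E t * (g * E t' * g⁻¹) * ⁅g, h⁆ * (h * E (-t) * h⁻¹) * E (-t') := by
    simp only [map_neg_of_map_add hE, commutatorElement_def]; group
  rw [this, hg, hgh, hh, ← hE, ← hE, ← hE, ← hE]
  congr 1; ring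

variable (hE : ∀ r s, E (r + s) = E r * E s) (γ : G →* G) (d : R)

def eigenSubgroup : Subgroup G where
  carrier := {g | ∃ s, E s = g ∧ γ g = E (d * s)}
  one_mem' := ⟨0, map_zero_of_map_add hE, by rw [map_one, mul_zero, map_zero_of_map_add hE]⟩
  mul_mem' := by
    rintro _ _ ⟨s, rfl, hs⟩ ⟨s', rfl, hs'⟩
    refine ⟨s + s', hE s s', ?_⟩
    rw [map_mul, hs, hs', ← hE, mul_add]
  inv_mem' := by
    rintro _ ⟨s, rfl, hs⟩
    refine ⟨-s, map_neg_of_map_add hE s, ?_⟩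
    rw [map_inv, hs, ← map_neg_of_map_add hE, mul_neg]

variable {hE γ d}

theorem conj_mem_eigenSubgroup {g : G} {u t : R} (hg : ∀ s, g * E s * g⁻¹ = E (u * s))
    (hγg : γ g = E t * g) {k : G} (hk : k ∈ eigenSubgroup hE γ d) :
    g * k * g⁻¹ ∈ eigenSubgroup hE γ d := by
  obtain ⟨s, rfl, hs⟩ := hk
  refine ⟨u * s, (hg s).symm, ?_⟩
  have : E t * g * E (d * s) * (E t * g)⁻¹ = E (t + u * (d * s) + -t) := by
    rw [hE, hE, ← hg, map_neg_of_map_add hE]; group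
  rw [map_mul, map_mul, map_inv, hs, hγg, this]
  congr 1; ring

theorem mem_normalizer_eigenSubgroup {g : G} {u : Rˣ} {t : R}
    (hg : ∀ s, g * E s * g⁻¹ = E (u * s)) (hγg : γ g = E t * g) :
    g ∈ Subgroup.normalizer (eigenSubgroup hE γ d : Set G) := by
  have hγg_inv : γ g⁻¹ = E (↑u⁻¹ * -t) * g⁻¹ := by
    rw [← inv_conj_eq_of_conj_eq hg, map_inv, hγg, map_neg_of_map_add hE]; group
  refine Subgroup.mem_normalizer_iff.mpr fun k ↦ ⟨conj_mem_eigenSubgroup hg hγg, fun hk ↦ ?_⟩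
  have := conj_mem_eigenSubgroup (fun s ↦ by rw [inv_inv]; exact inv_conj_eq_of_conj_eq hg s)
    hγg_inv hk
  rwa [inv_inv, ← mul_assoc, ← mul_assoc, inv_mul_cancel, one_mul, inv_mul_cancel_right] at this

end AdditiveCoordinate

theorem stmt_17_general {G : Type*} [Group G] {R : Type*} [CommRing R]
    (x₁ x₂ : G) (hgen : Subgroup.closure ({x₁, x₂} : Set G) = ⊤)
    (a₁ a₂ : Rˣ) (E : R → G)
    (hE_inj : Function.Injective E)
    (hE_range : Set.range E = (commutator G : Set G))
    (hE_add : ∀ r s : R, E (r + s) = E r * E s)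
    (hE_one : E 1 = ⁅x₁, x₂⁆)
    (hconj₁ : ∀ r : R, x₁ * E r * x₁⁻¹ = E ((a₁ : R) * r))
    (hconj₂ : ∀ r : R, x₂ * E r * x₂⁻¹ = E ((a₂ : R) * r))
    (r₁ r₂ : R) (γ : G →* G)
    (hγ₁ : γ x₁ = E r₁ * x₁) (hγ₂ : γ x₂ = E r₂ * x₂) :
    ∀ s : R, γ (E s) = E ((1 + r₁ * (1 - (a₂ : R)) + r₂ * ((a₁ : R) - 1)) * s) := by
  intro s
  set H := eigenSubgroup hE_add γ (1 + r₁ * (1 - (a₂ : R)) + r₂ * ((a₁ : R) - 1))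
  have : H.Normal := by
    rw [← Subgroup.normalizer_eq_top_iff, eq_top_iff, ← hgen, Subgroup.closure_le]
    rintro _ (rfl | rfl)
    exacts [mem_normalizer_eigenSubgroup hconj₁ hγ₁, mem_normalizer_eigenSubgroup hconj₂ hγ₂]
  have hc : ⁅x₁, x₂⁆ ∈ H := by
    refine ⟨1, hE_one, ?_⟩
    rw [map_commutatorElement, hγ₁, hγ₂,
      commutatorElement_mul_mul_of_conj hE_add hconj₁ hconj₂ hE_one.symm]
    congr 1; ring
  obtain ⟨s', hs', hγs'⟩ :=
    commutator_le_of_closure_pair_eq_top hgen hc (hE_range ▸ Set.mem_range_self s)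
  rwa [hE_inj hs'] at hγs'

/-- Abstract setting for the rank-2 free profinite metabelian group `M̂` (a group `G`
generated by `x₁, x₂`) whose derived subgroup `M̂' = ⁅G,G⁆` is a free rank-1 module
over `R = Ẑ[[Â]]` with basis `c = [x₁,x₂]`, the module action `r ↦ c^r` (encoded by
the map `E : R → G`, so `E r = [x₁,x₂]^r`) extending the conjugation action of the
abelianization (with `a₁, a₂ ∈ Rˣ` the images of `x₁, x₂`).

If `γ` is the IA-endomorphism `γ_r` with `γ(xᵢ) = [x₁,x₂]^{rᵢ} xᵢ`, then `γ` acts on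
`M̂'` by multiplication by `det(γ_r) = 1 + r₁(1 − a₂) + r₂(a₁ − 1)`:
`γ([x₁,x₂]^s) = [x₁,x₂]^{det(γ_r)·s}` for all `s`; in particular (at `s = 1`)
`γ([x₁,x₂]) = [x₁,x₂]^{1 + r₁(1−a₂) + r₂(a₁−1)}`. -/
theorem stmt_17 {G : Type*} [Group G] {R : Type*} [CommRing R]
    (x₁ x₂ : G) (hgen : Subgroup.closure ({x₁, x₂} : Set G) = ⊤)
    (a₁ a₂ : Rˣ) (E : R → G)
    (hE_inj : Function.Injective E)
    (hE_range : Set.range E = (commutator G : Set G))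
    (hE_add : ∀ r s : R, E (r + s) = E r * E s)
    (hE_one : E 1 = ⁅x₁, x₂⁆)
    (hconj₁ : ∀ r : R, x₁ * E r * x₁⁻¹ = E ((a₁ : R) * r))
    (hconj₂ : ∀ r : R, x₂ * E r * x₂⁻¹ = E ((a₂ : R) * r))
    (r₁ r₂ : R) (γ : G →* G)
    (hIA : ∀ g : G, γ g * g⁻¹ ∈ commutator G)
    (hγ₁ : γ x₁ = E r₁ * x₁) (hγ₂ : γ x₂ = E r₂ * x₂) :
    ∀ s : R, γ (E s) = E ((1 + r₁ * (1 - (a₂ : R)) + r₂ * ((a₁ : R) - 1)) * s) :=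
  stmt_17_general x₁ x₂ hgen a₁ a₂ E hE_inj hE_range hE_add hE_one hconj₁ hconj₂ r₁ r₂ γ hγ₁ hγ₂
end
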